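/- Let A = M_n(F) carry the elementary grading induced by an n-tuple (h_1,…,h_n) of pairwise distinct elements of a group G, and let H ≤ S_n be the group of permutations whose associated automorphisms Λ_σ are graded. (1) If there exist a non-zero diagonal matrix P and a polynomial f in F⟨X_G⟩ that is not a graded identity for A such that the result of every f-admissible substitution is a scalar multiple of P, then there exists a group homomorphism λ: H → F^× such that P is a linear combination of the matrices P(i_1),…,P(i_d), where P(i) = Σ_{α∈H} λ(α)E_{α(i),α(i)} and i_1,…,i_d is a system of representatives of the H-orbits on {1,…,n}. (2) Conversely, given a homomorphism λ: H → F^× and a non-zero diagonal matrix P = diag(p_1,…,p_n) that is a linear combination of P(i_1),…,P(i_d), the multilinear polynomial f = Σ_i p_i · x_{σ^i(1),g_{σ^i(1)}}⋯x_{σ^i(n),g_{σ^i(n)}}, where σ is the n-cycle (1 2 … n), g_i = h_i^{-1}h_{i+1} for i < n and g_n = h_n^{-1}h_1, is not a graded identity for A and the result of every f-admissible substitution is a scalar multiple of P. -/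

import Mathlib

section GradedDefs

variable {F : Type*} [Field F] {G : Type*} [Group G] {A : Type*} [Ring A] [Algebra F A]

/-- An internal algebra grading of `A` by the group `G`: the components are independent,
span `A`, and multiply according to the group operation. -/
structure IsAlgGrading [DecidableEq G] (𝒜 : G → Submodule F A) : Prop where
  internal : DirectSum.IsInternal 𝒜
  mul_mem : ∀ {g h : G} {x y : A}, x ∈ 𝒜 g → y ∈ 𝒜 h → x * y ∈ 𝒜 (g * h)

/-- An admissible (graded) substitution: the variable `x_{i,g}` is replaced by an element
of the homogeneous component of degree `g`. -/
def GradedSubst (𝒜 : G → Submodule F A) (a : ℕ × G → A) : Prop := ∀ p : ℕ × G, a p ∈ 𝒜 p.2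

/-- `f` is a graded polynomial identity. -/
def IsGradedIdentity (𝒜 : G → Submodule F A) (f : FreeAlgebra F (ℕ × G)) : Prop :=
  ∀ a : ℕ × G → A, GradedSubst 𝒜 a → FreeAlgebra.lift F a f = 0

/-- `f` is a graded central polynomial. -/
def IsGradedCentral (𝒜 : G → Submodule F A) (f : FreeAlgebra F (ℕ × G)) : Prop :=
  ¬ IsGradedIdentity 𝒜 f ∧
    ∀ a : ℕ × G → A, GradedSubst 𝒜 a → FreeAlgebra.lift F a f ∈ Set.center A

/-- `f` only uses (graded) variables from the set `S`. -/
def UsesVars (S : Set (ℕ × G)) (f : FreeAlgebra F (ℕ × G)) : Prop :=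
  f ∈ Algebra.adjoin F (FreeAlgebra.ι F '' S)

/-- The primeness property for graded central polynomials: if a product of two polynomials
in disjoint sets of variables is graded central, then both factors are graded central. -/
def HasGradedPrimeness (𝒜 : G → Submodule F A) : Prop :=
  ∀ (S T : Set (ℕ × G)) (f g : FreeAlgebra F (ℕ × G)),
    Disjoint S T → UsesVars S f → UsesVars T g →
    IsGradedCentral 𝒜 (f * g) →
    IsGradedCentral 𝒜 f ∧ IsGradedCentral 𝒜 g

end GradedDefs

section Elementary

variable (F : Type*) [Field F] {G : Type*} [Group G] {n : ℕ}

/-- The homogeneous component of degree `x` of the elementary grading of `Mₙ(F)`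
induced by the tuple `v`: it is spanned by the matrix units `E i j` with
`(v i)⁻¹ * v j = x`. -/
def elemComp (v : Fin n → G) (x : G) : Submodule F (Matrix (Fin n) (Fin n) F) where
  carrier := {M | ∀ i j, (v i)⁻¹ * v j ≠ x → M i j = 0}
  add_mem' := by
    intro M N hM hN i j h
    simp [Matrix.add_apply, hM i j h, hN i j h]
  zero_mem' := by intro i j _; simp
  smul_mem' := by
    intro c M hM i j h
    simp [Matrix.smul_apply, hM i j h]

/-- The subgroup of permutations `σ` of `{1,…,n}` for which the automorphism `Λ_σ`
(which sends `E i j` to `E (σ i) (σ j)`) is a graded automorphism. -/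
def GradedPerms (v : Fin n → G) : Subgroup (Equiv.Perm (Fin n)) where
  carrier := {σ | ∀ i j, (v (σ i))⁻¹ * v (σ j) = (v i)⁻¹ * v j}
  one_mem' := by intro i j; simp
  mul_mem' := by
    intro σ τ hσ hτ i j
    simpa [Equiv.Perm.mul_apply] using (hσ (τ i) (τ j)).trans (hτ i j)
  inv_mem' := by
    intro σ hσ i j
    simpa using (hσ (σ⁻¹ i) (σ⁻¹ j)).symm

/-- The automorphism `Λ_σ` of the matrix algebra, determined by
`Λ_σ (E i j) = E (σ i) (σ j)`. -/
def permConj (σ : Equiv.Perm (Fin n)) (M : Matrix (Fin n) (Fin n) F) :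
    Matrix (Fin n) (Fin n) F :=
  M.submatrix ⇑σ.symm ⇑σ.symm

end Elementary

section Pmat

variable (F : Type*) [Field F] {G : Type*} [Group G] {n : ℕ}

noncomputable instance (v : Fin n → G) : Fintype ↥(GradedPerms v) := Fintype.ofFinite _

/-- The diagonal matrix `P(i) = ∑_{α ∈ H} λ(α) E (α i) (α i)`. -/
noncomputable def Pmat (v : Fin n → G) (lam : ↥(GradedPerms v) →* Fˣ) (i : Fin n) :
    Matrix (Fin n) (Fin n) F :=
  ∑ α : ↥(GradedPerms v),
    ((lam α : Fˣ) : F) •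
      Matrix.single ((α : Equiv.Perm (Fin n)) i) ((α : Equiv.Perm (Fin n)) i) 1

end Pmat

section Cyclic

variable (F : Type*) [Field F] {G : Type*} [Group G] {n : ℕ} [NeZero n]

/-- The multilinear polynomial `f = ∑ᵢ pᵢ · x_{σ^i(1)} ⋯ x_{σ^i(n)}` associated to the
`n`-cycle `σ = (1 2 … n)`, where the variable `x_t` has degree `v t⁻¹ * v (t+1)`
(indices mod `n`). -/
noncomputable def cyclicPoly (v : Fin n → G) (p : Fin n → F) : FreeAlgebra F (ℕ × G) :=
  ∑ i : Fin n, p i •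
    (List.ofFn fun t : Fin n =>
      FreeAlgebra.ι F (((i + t : Fin n) : ℕ), (v (i + t))⁻¹ * v (i + t + 1))).prod

end Cyclic

/-!
If every admissible value of `f` is a multiple of the diagonal matrix `P`, then so is every value
at a substitution twisted by a graded automorphism `Λ_σ`, `σ ∈ H`; hence `Λ_σ P` is a multiple
`χ(σ) • P` of `P` and `χ` is a character of `H`. Reading this on the diagonal gives
`P (σ j) (σ j) = χ(σ)⁻¹ * P j j`, and since the distinct `h_i` make `H` act freely, a diagonal
matrix with this equivariance is the combination of the `P(i_t)` with coefficients `P i_t i_t`.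

Conversely, a cyclic product `b_i b_{i+1} ⋯ b_{i-1}` of homogeneous matrices of degrees
`g_i, …, g_{i-1}` has degree `1`, so it is diagonal, and its entry at `(k, k)` vanishes unless
`k = σ i` for some `σ ∈ H`, in which case it is `∏ₛ b_s (σ s) (σ (s+1))`. As the entries of `p`
transform by `λ`, the value of `cyclicPoly v p` is `(∑_σ λ(σ)⁻¹ ∏ₛ b_s (σ s) (σ (s+1))) • diag p`,
and the substitution `x_{s, g_s} ↦ E s (s+1)` makes this scalar `1`.
-/

theorem FreeAlgebra.lift_comp_apply {R X A B Φ : Type*} [CommSemiring R] [Semiring A]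
    [Algebra R A] [Semiring B] [Algebra R B] [FunLike Φ A B] [AlgHomClass Φ R A B] (φ : Φ)
    (a : X → A) (f : FreeAlgebra R X) :
    FreeAlgebra.lift R (φ ∘ a) f = φ (FreeAlgebra.lift R a f) := by
  change _ = (AlgHomClass.toAlgHom φ).comp (FreeAlgebra.lift R a) f
  exact DFunLike.congr_fun (FreeAlgebra.hom_ext (by ext; simp)) f

theorem List.prod_ofFn_val_succ {M : Type*} [Monoid M] (c : ℕ → M) (m : ℕ) :
    (List.ofFn fun t : Fin (m + 1) => c t).prod =
      c 0 * (List.ofFn fun t : Fin m => c (t + 1)).prod := by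
  simp [List.ofFn_succ]

theorem Representation.exists_character_of_forall_exists_smul {k K V : Type*} [Field k]
    [Group K] [AddCommGroup V] [Module k V] (ρ : Representation k K V) {x : V} (hx : x ≠ 0)
    (h : ∀ g, ∃ c : k, ρ g x = c • x) : ∃ χ : K →* kˣ, ∀ g, ρ g x = (χ g : k) • x := by
  choose μ hμ using h
  have hinj := smul_left_injective k hx
  let μHom : K →* k :=
    { toFun := μ
      map_one' := hinj (by simp only [← hμ, map_one, Module.End.one_apply, one_smul])
      map_mul' := fun g g' => hinj <| show μ (g * g') • x = (μ g * μ g') • x by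
        rw [← hμ, map_mul, Module.End.mul_apply, hμ, map_smul, hμ, smul_smul, mul_comm] }
  exact ⟨μHom.toHomUnits, hμ⟩

/-- `σ ↦ Λ_σ`, as a representation. -/
def Matrix.reindexRep (R : Type*) [CommSemiring R] (m : Type*) [Fintype m] [DecidableEq m] :
    Representation R (Equiv.Perm m) (Matrix m m R) where
  toFun σ := (Matrix.reindexAlgEquiv R R σ).toLinearMap
  map_one' := by ext; rfl
  map_mul' σ τ := by
    ext M : 1
    simp [Equiv.Perm.mul_def, ← Matrix.reindexAlgEquiv_trans_reindexAlgEquiv]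

theorem Matrix.reindexRep_apply (R : Type*) [CommSemiring R] {m : Type*} [Fintype m]
    [DecidableEq m] (σ : Equiv.Perm m) (M : Matrix m m R) :
    Matrix.reindexRep R m σ M = Matrix.reindexAlgEquiv R R σ M := rfl

section GradedPerms

variable {G : Type*} [Group G] {n : ℕ} {v : Fin n → G}

theorem mem_gradedPerms {σ : Equiv.Perm (Fin n)} :
    σ ∈ GradedPerms v ↔ ∀ i j, (v (σ i))⁻¹ * v (σ j) = (v i)⁻¹ * v j := Iff.rfl

theorem apply_eq_of_mem_gradedPerms {σ : Equiv.Perm (Fin n)} (hσ : σ ∈ GradedPerms v)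
    (i j : Fin n) : v (σ j) = v (σ i) * ((v i)⁻¹ * v j) := by
  rw [← mem_gradedPerms.1 hσ i j, mul_inv_cancel_left]

theorem gradedPerms_apply_injective (hv : Function.Injective v) (i : Fin n) :
    Function.Injective fun σ : GradedPerms v => (σ : Equiv.Perm (Fin n)) i := by
  intro σ τ h
  refine Subtype.ext <| Equiv.ext fun j => hv ?_
  rw [apply_eq_of_mem_gradedPerms σ.2 i j, apply_eq_of_mem_gradedPerms τ.2 i j]
  exact congrArg (fun k => v k * ((v i)⁻¹ * v j)) h

theorem exists_mem_gradedPerms_apply_eq (hv : Function.Injective v) {i k : Fin n}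
    (h : ∀ j, ∃ r, v r = v k * ((v i)⁻¹ * v j)) : ∃ σ ∈ GradedPerms v, σ i = k := by
  choose τ hτ using h
  have hτ_inj : Function.Injective τ := fun a b hab =>
    hv (mul_left_cancel (mul_left_cancel ((hτ a).symm.trans ((congrArg v hab).trans (hτ b)))))
  refine ⟨Equiv.ofBijective τ (Finite.injective_iff_bijective.1 hτ_inj), fun a b => ?_, hv ?_⟩
  · simp only [Equiv.ofBijective_apply, hτ]
    group
  · simp [hτ]

end GradedPerms

section ElementaryGrading

variable {F : Type*} [Field F] {G : Type*} [Group G] {n : ℕ} {v : Fin n → G}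

theorem mem_elemComp {g : G} {M : Matrix (Fin n) (Fin n) F} :
    M ∈ elemComp F v g ↔ ∀ i j, (v i)⁻¹ * v j ≠ g → M i j = 0 := Iff.rfl

theorem single_mem_elemComp (i j : Fin n) (x : F) :
    Matrix.single i j x ∈ elemComp F v ((v i)⁻¹ * v j) :=
  mem_elemComp.2 fun _ _ hne =>
    Matrix.single_apply_of_ne _ _ _ _ _ (by rintro ⟨rfl, rfl⟩; exact hne rfl)

theorem one_mem_elemComp : (1 : Matrix (Fin n) (Fin n) F) ∈ elemComp F v 1 :=
  mem_elemComp.2 fun _ _ hne => Matrix.one_apply_ne (by rintro rfl; exact hne (inv_mul_cancel _))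

theorem mul_mem_elemComp {g h : G} {M N : Matrix (Fin n) (Fin n) F}
    (hM : M ∈ elemComp F v g) (hN : N ∈ elemComp F v h) : M * N ∈ elemComp F v (g * h) := by
  refine mem_elemComp.2 fun i j hne =>
    (Matrix.mul_apply ..).trans <| Finset.sum_eq_zero fun m _ => ?_
  by_cases hg : (v i)⁻¹ * v m = g
  · have hh : (v m)⁻¹ * v j ≠ h := by rintro rfl; exact hne (by rw [← hg]; group)
    rw [mem_elemComp.1 hN m j hh, mul_zero]
  · rw [mem_elemComp.1 hM i m hg, zero_mul]

theorem reindex_mem_elemComp {σ : Equiv.Perm (Fin n)} (hσ : σ ∈ GradedPerms v) {g : G}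
    {M : Matrix (Fin n) (Fin n) F} (hM : M ∈ elemComp F v g) :
    Matrix.reindexAlgEquiv F F σ M ∈ elemComp F v g :=
  mem_elemComp.2 fun i j hne => mem_elemComp.1 hM _ _ <| by
    rwa [← mem_gradedPerms.1 ((GradedPerms v).inv_mem hσ) i j] at hne

theorem apply_eq_zero_of_mem_elemComp_one (hv : Function.Injective v)
    {M : Matrix (Fin n) (Fin n) F} (hM : M ∈ elemComp F v 1) {k l : Fin n} (hkl : k ≠ l) :
    M k l = 0 :=
  mem_elemComp.1 hM k l fun h => hkl (hv (inv_mul_eq_one.1 h))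

theorem mul_apply_eq_of_mem_elemComp (hv : Function.Injective v) {g : G}
    {M : Matrix (Fin n) (Fin n) F} (hM : M ∈ elemComp F v g) {k k' : Fin n}
    (hk' : v k' = v k * g) (N : Matrix (Fin n) (Fin n) F) (l : Fin n) :
    (M * N) k l = M k k' * N k' l := by
  rw [Matrix.mul_apply, Finset.sum_eq_single k' (fun m _ hm => ?_) (by simp)]
  rw [mem_elemComp.1 hM k m fun h => hm (hv (by rw [hk', ← h, mul_inv_cancel_left])), zero_mul]

theorem exists_of_mul_apply_ne_zero {g : G} {M N : Matrix (Fin n) (Fin n) F}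
    (hM : M ∈ elemComp F v g) {k l : Fin n} (h : (M * N) k l ≠ 0) :
    ∃ k', v k' = v k * g ∧ N k' l ≠ 0 := by
  rw [Matrix.mul_apply] at h
  obtain ⟨k', -, hk'⟩ := Finset.exists_ne_zero_of_sum_ne_zero h
  refine ⟨k', ?_, right_ne_zero_of_mul hk'⟩
  by_contra hne
  exact left_ne_zero_of_mul hk' <|
    mem_elemComp.1 hM k k' fun h => hne (by rw [← h, mul_inv_cancel_left])

end ElementaryGrading

section Paths

variable {F : Type*} [Field F] {G : Type*} [Group G] {n : ℕ} {v : Fin n → G}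
  {u : ℕ → Fin n} {c : ℕ → Matrix (Fin n) (Fin n) F}

theorem ofFn_prod_mem_elemComp (hc : ∀ t, c t ∈ elemComp F v ((v (u t))⁻¹ * v (u (t + 1))))
    (m : ℕ) : (List.ofFn fun t : Fin m => c t).prod ∈ elemComp F v ((v (u 0))⁻¹ * v (u m)) := by
  induction m generalizing u c with
  | zero => simpa using one_mem_elemComp
  | succ m ih =>
    rw [List.prod_ofFn_val_succ, show (v (u 0))⁻¹ * v (u (m + 1)) =
      ((v (u 0))⁻¹ * v (u 1)) * ((v (u 1))⁻¹ * v (u (m + 1))) by group]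
    exact mul_mem_elemComp (hc 0) (ih (u := fun t => u (t + 1)) fun t => hc (t + 1))

theorem ofFn_prod_apply_perm (hv : Function.Injective v)
    (hc : ∀ t, c t ∈ elemComp F v ((v (u t))⁻¹ * v (u (t + 1))))
    {σ : Equiv.Perm (Fin n)} (hσ : σ ∈ GradedPerms v) (m : ℕ) :
    (List.ofFn fun t : Fin m => c t).prod (σ (u 0)) (σ (u m)) =
      ∏ t ∈ Finset.range m, c t (σ (u t)) (σ (u (t + 1))) := by
  induction m generalizing u c with
  | zero => simp
  | succ m ih =>
    rw [List.prod_ofFn_val_succ, mul_apply_eq_of_mem_elemComp hv (hc 0)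
      (apply_eq_of_mem_gradedPerms hσ (u 0) (u 1)), Finset.prod_range_succ', mul_comm,
      ih (u := fun t => u (t + 1)) fun t => hc (t + 1)]

theorem exists_translate_of_ofFn_prod_apply_ne_zero
    (hc : ∀ t, c t ∈ elemComp F v ((v (u t))⁻¹ * v (u (t + 1)))) {m : ℕ} {k l : Fin n}
    (h : (List.ofFn fun t : Fin m => c t).prod k l ≠ 0) {t : ℕ} (ht : t ≤ m) :
    ∃ r, v r = v k * ((v (u 0))⁻¹ * v (u t)) := by
  induction m generalizing u c k t with
  | zero => exact ⟨k, by rw [Nat.le_zero.1 ht]; group⟩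
  | succ m ih =>
    rw [List.prod_ofFn_val_succ] at h
    obtain ⟨k', hk', h'⟩ := exists_of_mul_apply_ne_zero (hc 0) h
    cases t with
    | zero => exact ⟨k, by group⟩
    | succ t =>
      obtain ⟨r, hr⟩ :=
        ih (u := fun t => u (t + 1)) (fun t => hc (t + 1)) h' (t := t) (by omega)
      exact ⟨r, by rw [hr, hk']; group⟩

end Paths

section Pmat

variable {F : Type*} [Field F] {G : Type*} [Group G] {n : ℕ} {v : Fin n → G}
  (lam : GradedPerms v →* Fˣ)

theorem Pmat_apply_same (i m : Fin n) :
    Pmat F v lam i m m =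
      ∑ α : GradedPerms v, if (α : Equiv.Perm (Fin n)) i = m then (lam α : F) else 0 := by
  simp [Pmat, Matrix.sum_apply, Matrix.single_apply]

theorem Pmat_apply_of_ne (i : Fin n) {k l : Fin n} (hkl : k ≠ l) : Pmat F v lam i k l = 0 := by
  simp only [Pmat, Matrix.sum_apply, Matrix.smul_apply, Matrix.single_apply]
  exact Finset.sum_eq_zero fun α _ => by
    rw [if_neg fun h => hkl (h.1.symm.trans h.2), smul_zero]

theorem Pmat_apply_perm (i : Fin n) (σ : GradedPerms v) (j : Fin n) :
    Pmat F v lam i ((σ : Equiv.Perm (Fin n)) j) ((σ : Equiv.Perm (Fin n)) j) =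
      lam σ * Pmat F v lam i j j := by
  rw [Pmat_apply_same, Pmat_apply_same, Finset.mul_sum]
  refine (Fintype.sum_equiv (Equiv.mulLeft σ) _ _ fun β => ?_).symm
  simp [Equiv.Perm.mul_apply]

theorem Pmat_apply_same_eq_zero {i m : Fin n}
    (h : ∀ α : GradedPerms v, (α : Equiv.Perm (Fin n)) i ≠ m) : Pmat F v lam i m m = 0 := by
  simp [Pmat_apply_same, h]

theorem Pmat_apply_self_self (hv : Function.Injective v) (i : Fin n) :
    Pmat F v lam i i i = 1 := by
  rw [Pmat_apply_same, Fintype.sum_eq_single 1 fun α hα => if_neg fun h => hα ?_]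
  · simp
  · exact gradedPerms_apply_injective hv i h

end Pmat

section OrbitCombinations

variable {F : Type*} [Field F] {G : Type*} [Group G] {n : ℕ} {v : Fin n → G}
  {lam : GradedPerms v →* Fˣ} {ι : Type*} [Fintype ι] (reps : ι → Fin n)

theorem apply_perm_of_diagonal_eq_sum_Pmat {p : Fin n → F} {c : ι → F}
    (hc : Matrix.diagonal p = ∑ t, c t • Pmat F v lam (reps t)) (σ : GradedPerms v)
    (j : Fin n) : p ((σ : Equiv.Perm (Fin n)) j) = lam σ * p j := by
  have hp (m : Fin n) : p m = ∑ t, c t * Pmat F v lam (reps t) m m := by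
    simpa [Matrix.sum_apply] using congrFun (congrFun hc m) m
  simp only [hp, Pmat_apply_perm, Finset.mul_sum]
  exact Finset.sum_congr rfl fun t _ => mul_left_comm _ _ _

theorem eq_sum_Pmat_of_apply_perm (hv : Function.Injective v)
    (hreps : ∀ m, ∃! t, ∃ σ : GradedPerms v, (σ : Equiv.Perm (Fin n)) (reps t) = m)
    {P : Matrix (Fin n) (Fin n) F} (hP_diag : ∀ k l, k ≠ l → P k l = 0)
    (hP : ∀ (σ : GradedPerms v) j,
      P ((σ : Equiv.Perm (Fin n)) j) ((σ : Equiv.Perm (Fin n)) j) = lam σ * P j j) :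
    P = ∑ t, P (reps t) (reps t) • Pmat F v lam (reps t) := by
  ext k l
  rcases eq_or_ne k l with rfl | hkl
  · obtain ⟨t₀, ⟨σ, rfl⟩, ht₀⟩ := hreps k
    rw [Matrix.sum_apply, Finset.sum_eq_single t₀ (fun t _ ht => ?_) (by simp)]
    · simp [Pmat_apply_perm, Pmat_apply_self_self _ hv, hP, mul_comm]
    · rw [Matrix.smul_apply, Pmat_apply_same_eq_zero lam fun α hα => ht (ht₀ t ⟨α, hα⟩),
        smul_zero]
  · simp [hP_diag k l hkl, Matrix.sum_apply, Pmat_apply_of_ne lam _ hkl]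

end OrbitCombinations

section ScalarValued

variable {F : Type*} [Field F] {G : Type*} [Group G] {n : ℕ} {v : Fin n → G}

theorem exists_reindex_eq_smul_of_scalar_valued {P : Matrix (Fin n) (Fin n) F}
    {f : FreeAlgebra F (ℕ × G)} (hf : ¬ IsGradedIdentity (elemComp F v) f)
    (hval : ∀ a, GradedSubst (elemComp F v) a → ∃ c : F, FreeAlgebra.lift F a f = c • P)
    {σ : Equiv.Perm (Fin n)} (hσ : σ ∈ GradedPerms v) :
    ∃ c : F, Matrix.reindexAlgEquiv F F σ P = c • P := by
  obtain ⟨a, ha, hne⟩ : ∃ a, GradedSubst (elemComp F v) a ∧ FreeAlgebra.lift F a f ≠ 0 := by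
    simpa [IsGradedIdentity] using hf
  obtain ⟨c₀, hc₀⟩ := hval a ha
  obtain ⟨c, hc⟩ := hval (Matrix.reindexAlgEquiv F F σ ∘ a)
    fun q => reindex_mem_elemComp hσ (ha q)
  have hc₀_ne : c₀ ≠ 0 := by rintro rfl; exact hne (by simp [hc₀])
  refine ⟨c₀⁻¹ * c, ?_⟩
  rw [FreeAlgebra.lift_comp_apply, hc₀, map_smul] at hc
  rw [mul_smul, ← hc, inv_smul_smul₀ hc₀_ne]

theorem exists_eq_sum_Pmat_of_scalar_valued (hv : Function.Injective v) {ι : Type*}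
    [Fintype ι] (reps : ι → Fin n)
    (hreps : ∀ m, ∃! t, ∃ σ : GradedPerms v, (σ : Equiv.Perm (Fin n)) (reps t) = m)
    {P : Matrix (Fin n) (Fin n) F} (hP : P ≠ 0) (hP_diag : ∀ k l, k ≠ l → P k l = 0)
    {f : FreeAlgebra F (ℕ × G)} (hf : ¬ IsGradedIdentity (elemComp F v) f)
    (hval : ∀ a, GradedSubst (elemComp F v) a → ∃ c : F, FreeAlgebra.lift F a f = c • P) :
    ∃ (lam : GradedPerms v →* Fˣ) (c : ι → F), P = ∑ t, c t • Pmat F v lam (reps t) := by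
  obtain ⟨χ, hχ⟩ := Representation.exists_character_of_forall_exists_smul
    ((Matrix.reindexRep F (Fin n)).comp (GradedPerms v).subtype) hP
    fun σ => exists_reindex_eq_smul_of_scalar_valued hf hval σ.2
  refine ⟨χ⁻¹, _, eq_sum_Pmat_of_apply_perm reps hv hreps hP_diag fun σ j => ?_⟩
  have h := congrFun (congrFun (hχ σ) ((σ : Equiv.Perm (Fin n)) j)) ((σ : Equiv.Perm (Fin n)) j)
  simp only [MonoidHom.comp_apply, Subgroup.coe_subtype, Matrix.reindexRep_apply,
    Matrix.coe_reindexAlgEquiv, Matrix.reindex_apply, Matrix.submatrix_apply,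
    Equiv.symm_apply_apply, Matrix.smul_apply, smul_eq_mul] at h
  rw [h, MonoidHom.inv_apply, Units.val_inv_eq_inv_val, inv_mul_cancel_left₀ (χ σ).ne_zero]

end ScalarValued

section Cyclic

open Fin.NatCast

variable {F : Type*} [Field F] {G : Type*} [Group G] {n : ℕ} [NeZero n] {v : Fin n → G}

def cyclicProd {M : Type*} [Monoid M] (b : Fin n → M) (i : Fin n) : M :=
  (List.ofFn fun t : Fin n => b (i + t)).prod

theorem cyclicProd_eq_ofFn_prod {M : Type*} [Monoid M] (b : Fin n → M) (i : Fin n) :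
    cyclicProd b i = (List.ofFn fun t : Fin n => b (i + ((t : ℕ) : Fin n))).prod := by
  simp [cyclicProd]

variable {b : Fin n → Matrix (Fin n) (Fin n) F}

theorem mem_elemComp_add_natCast (hb : ∀ s, b s ∈ elemComp F v ((v s)⁻¹ * v (s + 1)))
    (i : Fin n) (t : ℕ) :
    b (i + t) ∈ elemComp F v ((v (i + t))⁻¹ * v (i + ((t + 1 : ℕ) : Fin n))) := by
  rw [Nat.cast_succ, ← add_assoc]
  exact hb _

theorem cyclicProd_mem_elemComp_one (hb : ∀ s, b s ∈ elemComp F v ((v s)⁻¹ * v (s + 1)))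
    (i : Fin n) : cyclicProd b i ∈ elemComp F v 1 := by
  simpa [cyclicProd_eq_ofFn_prod] using
    ofFn_prod_mem_elemComp (u := fun t : ℕ => i + (t : Fin n)) (mem_elemComp_add_natCast hb i) n

theorem cyclicProd_apply_perm (hv : Function.Injective v)
    (hb : ∀ s, b s ∈ elemComp F v ((v s)⁻¹ * v (s + 1))) (i : Fin n)
    {σ : Equiv.Perm (Fin n)} (hσ : σ ∈ GradedPerms v) :
    cyclicProd b i (σ i) (σ i) = ∏ s, b s (σ s) (σ (s + 1)) := by
  have h := ofFn_prod_apply_perm (u := fun t : ℕ => i + (t : Fin n)) hv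
    (mem_elemComp_add_natCast hb i) hσ n
  simp only [Nat.cast_zero, add_zero, Fin.natCast_self] at h
  rw [cyclicProd_eq_ofFn_prod, h, ← Fin.prod_univ_eq_prod_range]
  simp only [Nat.cast_succ, Fin.cast_val_eq_self, ← add_assoc]
  exact Equiv.prod_comp (Equiv.addLeft i) fun s => b s (σ s) (σ (s + 1))

theorem exists_apply_eq_of_cyclicProd_apply_ne_zero (hv : Function.Injective v)
    (hb : ∀ s, b s ∈ elemComp F v ((v s)⁻¹ * v (s + 1))) {i k : Fin n}
    (h : cyclicProd b i k k ≠ 0) : ∃ σ ∈ GradedPerms v, σ i = k := by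
  rw [cyclicProd_eq_ofFn_prod] at h
  refine exists_mem_gradedPerms_apply_eq hv fun j => ?_
  obtain ⟨r, hr⟩ := exists_translate_of_ofFn_prod_apply_ne_zero
    (u := fun t : ℕ => i + (t : Fin n)) (mem_elemComp_add_natCast hb i) h
    (t := ((j - i : Fin n) : ℕ)) (Fin.is_lt _).le
  exact ⟨r, by simpa using hr⟩

theorem sum_smul_cyclicProd (hv : Function.Injective v)
    (hb : ∀ s, b s ∈ elemComp F v ((v s)⁻¹ * v (s + 1))) {lam : GradedPerms v →* Fˣ}
    {p : Fin n → F}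
    (hp : ∀ (σ : GradedPerms v) j, p ((σ : Equiv.Perm (Fin n)) j) = lam σ * p j) :
    ∑ i, p i • cyclicProd b i = (∑ σ : GradedPerms v, (lam σ : F)⁻¹ *
      ∏ s, b s ((σ : Equiv.Perm (Fin n)) s) ((σ : Equiv.Perm (Fin n)) (s + 1))) •
        Matrix.diagonal p := by
  ext k l
  rcases eq_or_ne k l with rfl | hkl
  · simp only [Matrix.sum_apply, Matrix.smul_apply, smul_eq_mul, Matrix.diagonal_apply_eq,
      Finset.sum_mul]
    -- only the indices `i = σ⁻¹ k` contribute
    refine (Fintype.sum_of_injective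
      (fun σ : GradedPerms v => ((σ⁻¹ : GradedPerms v) : Equiv.Perm (Fin n)) k)
      ((gradedPerms_apply_injective hv k).comp inv_injective) _ _ (fun i hi => ?_)
      (fun σ => ?_)).symm
    · by_contra hne
      obtain ⟨σ, hσ, rfl⟩ :=
        exists_apply_eq_of_cyclicProd_apply_ne_zero hv hb (right_ne_zero_of_mul hne)
      exact hi ⟨⟨σ, hσ⟩, by simp⟩
    · have hk : (σ : Equiv.Perm (Fin n)) (((σ⁻¹ : GradedPerms v) : Equiv.Perm (Fin n)) k) = k := by
        simp
      set j := ((σ⁻¹ : GradedPerms v) : Equiv.Perm (Fin n)) k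
      rw [← hk, cyclicProd_apply_perm hv hb j σ.2, hp σ j]
      field_simp
  · simp [Matrix.sum_apply, hkl,
      apply_eq_zero_of_mem_elemComp_one hv (cyclicProd_mem_elemComp_one hb _) hkl]

theorem lift_cyclicPoly (v : Fin n → G) (p : Fin n → F) (a : ℕ × G → Matrix (Fin n) (Fin n) F) :
    FreeAlgebra.lift F a (cyclicPoly F v p) =
      ∑ i, p i • cyclicProd (fun s : Fin n => a ((s : ℕ), (v s)⁻¹ * v (s + 1))) i := by
  simp [cyclicPoly, cyclicProd, map_list_prod, List.map_ofFn, Function.comp_def]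

open scoped Classical in
noncomputable def cyclicUnitSubst (v : Fin n → G) : ℕ × G → Matrix (Fin n) (Fin n) F :=
  fun q => if q.2 = (v q.1)⁻¹ * v (q.1 + 1) then Matrix.single (q.1 : Fin n) (q.1 + 1) 1 else 0

theorem gradedSubst_cyclicUnitSubst : GradedSubst (elemComp F v) (cyclicUnitSubst v) := by
  intro q
  unfold cyclicUnitSubst
  split_ifs with h
  · rw [h]
    exact single_mem_elemComp _ _ _
  · exact zero_mem _

theorem cyclicUnitSubst_apply (s : Fin n) :
    cyclicUnitSubst (F := F) v ((s : ℕ), (v s)⁻¹ * v (s + 1)) = Matrix.single s (s + 1) 1 := by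
  simp [cyclicUnitSubst]

theorem sum_prod_single_eq_one (lam : GradedPerms v →* Fˣ) :
    ∑ σ : GradedPerms v, (lam σ : F)⁻¹ * ∏ s, Matrix.single s (s + 1) (1 : F)
      ((σ : Equiv.Perm (Fin n)) s) ((σ : Equiv.Perm (Fin n)) (s + 1)) = 1 := by
  rw [Fintype.sum_eq_single 1 fun σ hσ => ?_]
  · simp
  obtain ⟨s, hs⟩ : ∃ s, (σ : Equiv.Perm (Fin n)) s ≠ s := by
    by_contra! h
    exact hσ (Subtype.ext (Equiv.ext h))
  rw [Finset.prod_eq_zero (Finset.mem_univ s), mul_zero]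
  exact Matrix.single_apply_of_ne _ _ _ _ _ fun h => hs h.1.symm

theorem cyclicPoly_not_isGradedIdentity (hv : Function.Injective v)
    {lam : GradedPerms v →* Fˣ} {p : Fin n → F}
    (hp : ∀ (σ : GradedPerms v) j, p ((σ : Equiv.Perm (Fin n)) j) = lam σ * p j)
    (hp0 : Matrix.diagonal p ≠ 0) : ¬ IsGradedIdentity (elemComp F v) (cyclicPoly F v p) := by
  intro hid
  have h := hid _ gradedSubst_cyclicUnitSubst
  simp only [lift_cyclicPoly, cyclicUnitSubst_apply] at h
  rw [sum_smul_cyclicProd hv (fun s => single_mem_elemComp _ _ _) hp, sum_prod_single_eq_one,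
    one_smul] at h
  exact hp0 h

theorem exists_lift_cyclicPoly_eq_smul (hv : Function.Injective v)
    {lam : GradedPerms v →* Fˣ} {p : Fin n → F}
    (hp : ∀ (σ : GradedPerms v) j, p ((σ : Equiv.Perm (Fin n)) j) = lam σ * p j)
    {a : ℕ × G → Matrix (Fin n) (Fin n) F} (ha : GradedSubst (elemComp F v) a) :
    ∃ c : F, FreeAlgebra.lift F a (cyclicPoly F v p) = c • Matrix.diagonal p :=
  ⟨_, (lift_cyclicPoly v p a).trans (sum_smul_cyclicProd hv (fun s => ha ((s : ℕ), _)) hp)⟩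

end Cyclic

theorem diagonal_scalar_valued_polynomials_general
    (F : Type*) [Field F]
    {G : Type*} [Group G] {n : ℕ} [NeZero n] (v : Fin n → G)
    (hv : Function.Injective v)
    (d : ℕ) (reps : Fin d → Fin n)
    (hreps : ∀ m : Fin n, ∃! t : Fin d,
      ∃ σ : ↥(GradedPerms v), (σ : Equiv.Perm (Fin n)) (reps t) = m) :
    (∀ (P : Matrix (Fin n) (Fin n) F) (f : FreeAlgebra F (ℕ × G)),
        P ≠ 0 → (∀ k l, k ≠ l → P k l = 0) →
        ¬ IsGradedIdentity (elemComp F v) f →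
        (∀ a : ℕ × G → Matrix (Fin n) (Fin n) F, GradedSubst (elemComp F v) a →
          ∃ c : F, FreeAlgebra.lift F a f = c • P) →
        ∃ lam : ↥(GradedPerms v) →* Fˣ, ∃ c : Fin d → F,
          P = ∑ t : Fin d, c t • Pmat F v lam (reps t))
    ∧ (∀ (lam : ↥(GradedPerms v) →* Fˣ) (p : Fin n → F),
        Matrix.diagonal p ≠ 0 →
        (∃ c : Fin d → F, Matrix.diagonal p = ∑ t : Fin d, c t • Pmat F v lam (reps t)) →
        ¬ IsGradedIdentity (elemComp F v) (cyclicPoly F v p) ∧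
          ∀ a : ℕ × G → Matrix (Fin n) (Fin n) F, GradedSubst (elemComp F v) a →
            ∃ c : F, FreeAlgebra.lift F a (cyclicPoly F v p) = c • Matrix.diagonal p) := by
  refine ⟨fun P f hP hP_diag hf hval =>
    exists_eq_sum_Pmat_of_scalar_valued hv reps hreps hP hP_diag hf hval, ?_⟩
  rintro lam p hp0 ⟨c, hc⟩
  have hp := apply_perm_of_diagonal_eq_sum_Pmat reps hc
  exact ⟨cyclicPoly_not_isGradedIdentity hv hp hp0,
    fun a ha => exists_lift_cyclicPoly_eq_smul hv hp ha⟩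

/-- Let `A = Mₙ(F)` carry the elementary grading induced by an
`n`-tuple `v` of pairwise distinct elements of `G` and let `i₁, …, i_d` be a system of
representatives of the orbits of `H = GradedPerms v`.
(1) If `P` is a non-zero diagonal matrix and `f` a non-identity all of whose admissible
values are scalar multiples of `P`, then there is a homomorphism `λ : H → Fˣ` such that
`P` is a linear combination of the matrices `P(i₁), …, P(i_d)`.
(2) Conversely, for a homomorphism `λ : H → Fˣ` and a non-zero diagonal matrix
`P = diag p` which is a linear combination of `P(i₁), …, P(i_d)`, the polynomial
`cyclicPoly v p` is not a graded identity and all of its admissible values are scalar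
multiples of `P`. -/
theorem diagonal_scalar_valued_polynomials
    (F : Type*) [Field F] [Infinite F] (hchar : (2 : F) ≠ 0)
    {G : Type*} [Group G] {n : ℕ} [NeZero n] (v : Fin n → G)
    (hv : Function.Injective v)
    (d : ℕ) (reps : Fin d → Fin n)
    (hreps : ∀ m : Fin n, ∃! t : Fin d,
      ∃ σ : ↥(GradedPerms v), (σ : Equiv.Perm (Fin n)) (reps t) = m) :
    (∀ (P : Matrix (Fin n) (Fin n) F) (f : FreeAlgebra F (ℕ × G)),
        P ≠ 0 → (∀ k l, k ≠ l → P k l = 0) →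
        ¬ IsGradedIdentity (elemComp F v) f →
        (∀ a : ℕ × G → Matrix (Fin n) (Fin n) F, GradedSubst (elemComp F v) a →
          ∃ c : F, FreeAlgebra.lift F a f = c • P) →
        ∃ lam : ↥(GradedPerms v) →* Fˣ, ∃ c : Fin d → F,
          P = ∑ t : Fin d, c t • Pmat F v lam (reps t))
    ∧ (∀ (lam : ↥(GradedPerms v) →* Fˣ) (p : Fin n → F),
        Matrix.diagonal p ≠ 0 →
        (∃ c : Fin d → F, Matrix.diagonal p = ∑ t : Fin d, c t • Pmat F v lam (reps t)) →
        ¬ IsGradedIdentity (elemComp F v) (cyclicPoly F v p) ∧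
          ∀ a : ℕ × G → Matrix (Fin n) (Fin n) F, GradedSubst (elemComp F v) a →
            ∃ c : F, FreeAlgebra.lift F a (cyclicPoly F v p) = c • Matrix.diagonal p) :=
  diagonal_scalar_valued_polynomials_general F v hv d reps hreps
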